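/- arXiv:2112.08851 — 5 statements merged into one kernel-verified Lean document; each statement's English description precedes it below -/
import Mathlib

section
/- For a fixed integer K with 1 ≤ K ≤ C/2, the adaptive gain satisfies the tighter lower bound Δ_K ≥ ∑_{k=1}^K d_{K,k}, where d_{K,k} = ∬ (η̃_{K+k}(x) − η̃_{K+1−k}(x'))⁺ dμ(x) dμ(x') is the straddle strength of order k, a⁺ = max(a, 0), and the double integral is over two independent copies of the input distribution. -/
open MeasureTheory Finset

/-- Error rate of a set-valued classifier: `ℰ(S) = ∫ (1 − ∑_{k∈S(x)} η_k(x)) dμ(x)`. -/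
noncomputable def errRate {𝒳 : Type*} [MeasurableSpace 𝒳] (μ : Measure 𝒳) {C : ℕ}
    (η : 𝒳 → Fin C → ℝ) (S : 𝒳 → Finset (Fin C)) : ℝ :=
  ∫ x, (1 - ∑ k ∈ S x, η x k) ∂μ

/-- Average set size of a set-valued classifier: `ℐ(S) = ∫ |S(x)| dμ(x)`. -/
noncomputable def avgSize {𝒳 : Type*} [MeasurableSpace 𝒳] (μ : Measure 𝒳) {C : ℕ}
    (S : 𝒳 → Finset (Fin C)) : ℝ :=
  ∫ x, ((S x).card : ℝ) ∂μ

/-- `G_η(λ) = ∑_{k=1}^C μ{x : η_k(x) > λ}`. -/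
noncomputable def Gfun {𝒳 : Type*} [MeasurableSpace 𝒳] (μ : Measure 𝒳) {C : ℕ}
    (η : 𝒳 → Fin C → ℝ) (lam : ℝ) : ℝ :=
  ∑ k : Fin C, (μ {x | lam < η x k}).toReal

/-- `λ_𝒦 = min {λ ∈ [0,1] : G_η(λ) ≤ 𝒦}` (as an infimum). -/
noncomputable def lamThresh {𝒳 : Type*} [MeasurableSpace 𝒳] (μ : Measure 𝒳) {C : ℕ}
    (η : 𝒳 → Fin C → ℝ) (K : ℝ) : ℝ :=
  sInf {lam : ℝ | lam ∈ Set.Icc (0 : ℝ) 1 ∧ Gfun μ η lam ≤ K}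

/-- `𝒮_𝒦^+(x) = {k : η_k(x) > λ_𝒦}`. -/
noncomputable def Splus {𝒳 : Type*} [MeasurableSpace 𝒳] (μ : Measure 𝒳) {C : ℕ}
    (η : 𝒳 → Fin C → ℝ) (K : ℝ) : 𝒳 → Finset (Fin C) :=
  fun x => Finset.univ.filter (fun k => lamThresh μ η K < η x k)

lemma card_filter_lt_fin {C K : ℕ} (hKC : K ≤ C) :
    (univ.filter (fun i : Fin C => (i : ℕ) < K)).card = K := by
  have : (univ.filter (fun i : Fin C => (i : ℕ) < K)).card = (Finset.range K).card := by
    refine Finset.card_nbij (fun i => (i : ℕ)) ?_ ?_ ?_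
    · intro a ha; simp only [Finset.mem_coe, mem_filter, mem_univ, true_and] at ha; simpa using ha
    · intro a _ b _ h; exact Fin.val_injective h
    · intro b hb
      simp only [Finset.coe_range, Set.mem_Iio] at hb
      exact ⟨⟨b, lt_of_lt_of_le hb hKC⟩, by simp [hb], rfl⟩
  simpa using this

lemma sum_top_set {C K : ℕ} (hKC : K ≤ C) (w : Fin C → ℝ)
    (hw : ∀ i j : Fin C, i ≤ j → w j ≤ w i)
    (S : Finset (Fin C)) (hcard : S.card = K)
    (hdom : ∀ i ∈ S, ∀ j ∉ S, w j ≤ w i) (g : ℝ → ℝ) :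
    ∑ i ∈ S, g (w i) = ∑ i ∈ univ.filter (fun i : Fin C => (i : ℕ) < K), g (w i) := by
  classical
  set Tk := univ.filter (fun i : Fin C => (i : ℕ) < K) with hTk
  have hTkcard : Tk.card = K := card_filter_lt_fin hKC
  have hval : ∀ a ∈ S \ Tk, ∀ b ∈ Tk \ S, w a = w b := by
    intro a ha b hb
    simp only [mem_sdiff, hTk, mem_filter, mem_univ, true_and, not_lt] at ha hb
    have hba : b ≤ a := by
      have : (b : ℕ) ≤ (a : ℕ) := by omega
      exact this
    have h1 : w a ≤ w b := hw b a hba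
    have h2 : w b ≤ w a := hdom a ha.1 b hb.2
    linarith
  have hcards : (S \ Tk).card = (Tk \ S).card := by
    have h1 : (S ∩ Tk).card + (S \ Tk).card = K := by
      rw [Finset.card_inter_add_card_sdiff]; exact hcard
    have h2 : (Tk ∩ S).card + (Tk \ S).card = K := by
      rw [Finset.card_inter_add_card_sdiff]; exact hTkcard
    rw [Finset.inter_comm] at h2; omega
  have hsd : ∑ i ∈ S \ Tk, g (w i) = ∑ i ∈ Tk \ S, g (w i) := by
    rcases Finset.eq_empty_or_nonempty (S \ Tk) with he | ⟨a0, ha0⟩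
    · have : (Tk \ S) = ∅ := Finset.card_eq_zero.mp (by rw [← hcards, he]; simp)
      rw [he, this]
    · have hne : (Tk \ S).Nonempty := Finset.card_pos.mp
        (by rw [← hcards]; exact Finset.card_pos.mpr ⟨a0, ha0⟩)
      obtain ⟨b0, hb0⟩ := hne
      have h1 : ∑ i ∈ S \ Tk, g (w i) = (S \ Tk).card • g (w a0) := by
        rw [← Finset.sum_const]
        exact Finset.sum_congr rfl fun a ha => by
          rw [hval a ha b0 hb0, hval a0 ha0 b0 hb0]
      have h2 : ∑ i ∈ Tk \ S, g (w i) = (Tk \ S).card • g (w a0) := by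
        rw [← Finset.sum_const]
        exact Finset.sum_congr rfl fun b hb => by rw [hval a0 ha0 b hb]
      rw [h1, h2, hcards]
  calc ∑ i ∈ S, g (w i) = ∑ i ∈ S ∩ Tk, g (w i) + ∑ i ∈ S \ Tk, g (w i) :=
        (Finset.sum_inter_add_sum_sdiff S Tk _).symm
    _ = ∑ i ∈ Tk ∩ S, g (w i) + ∑ i ∈ Tk \ S, g (w i) := by rw [Finset.inter_comm, hsd]
    _ = ∑ i ∈ Tk, g (w i) := Finset.sum_inter_add_sum_sdiff Tk S _

lemma sorted_meas {𝒳 : Type*} [MeasurableSpace 𝒳] {C : ℕ} (η : 𝒳 → Fin C → ℝ)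
    (hη : ∀ k, Measurable fun x => η x k) (ηs : 𝒳 → Fin C → ℝ)
    (hηs : ∀ x, ∃ σ : Equiv.Perm (Fin C), (∀ k, ηs x k = η x (σ k)) ∧
      ∀ i j : Fin C, i ≤ j → ηs x j ≤ ηs x i) (i : Fin C) :
    Measurable (fun x => ηs x i) := by
  classical
  apply measurable_of_Ioi
  intro t
  have hset : (fun x => ηs x i) ⁻¹' Set.Ioi t
      = {x | (i : ℕ) + 1 ≤ (univ.filter (fun k => t < η x k)).card} := by
    ext x
    obtain ⟨σ, hσ, hsort⟩ := hηs x
    have hcardeq : (univ.filter (fun k => t < η x k)).card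
        = (univ.filter (fun j => t < ηs x j)).card := by
      refine (Finset.card_nbij (fun j => σ j) ?_ ?_ ?_).symm
      · intro j hj; simp only [Finset.mem_coe, mem_filter, mem_univ, true_and] at hj ⊢
        rwa [← hσ j]
      · intro a _ b _ h; exact σ.injective h
      · intro k hk
        simp only [Finset.coe_filter, Set.mem_setOf_eq, mem_univ, true_and] at hk ⊢
        refine ⟨σ.symm k, ?_, by simp⟩
        show t < ηs x (σ.symm k)
        rw [hσ (σ.symm k)]; simpa using hk
    simp only [Set.mem_preimage, Set.mem_Ioi, Set.mem_setOf_eq, hcardeq]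
    constructor
    · intro ht
      have hiC := i.isLt
      have hsub : ∀ n : ℕ, (hn : n < (i : ℕ) + 1) → t < ηs x ⟨n, by omega⟩ := by
        intro n hn
        exact lt_of_lt_of_le ht (hsort ⟨n, by omega⟩ i (by
          rw [Fin.le_def]; simp; omega))
      calc (i : ℕ) + 1 = (Finset.range ((i : ℕ) + 1)).card := (Finset.card_range _).symm
        _ ≤ (univ.filter (fun j => t < ηs x j)).card := by
            apply Finset.card_le_card_of_injOn (fun n => (⟨n % C, Nat.mod_lt _ (by omega)⟩ : Fin C))
            · intro n hn
              simp only [Finset.mem_coe, Finset.mem_range] at hn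
              have hnC : n < C := by omega
              
              simp only [Finset.mem_coe, mem_filter, mem_univ, true_and]
              have : (⟨n % C, Nat.mod_lt _ (by omega)⟩ : Fin C) = ⟨n, hnC⟩ := by
                simp [Nat.mod_eq_of_lt hnC]
              rw [this]; exact hsub n hn
            · intro a ha b hb h
              simp only [Finset.coe_range, Set.mem_Iio] at ha hb
              have haC : a < C := by omega
              have hbC : b < C := by omega
              have := congrArg Fin.val h
              simpa [Nat.mod_eq_of_lt haC, Nat.mod_eq_of_lt hbC] using this
    · intro hcard
      by_contra hle
      push_neg at hle
      have hsub : univ.filter (fun j => t < ηs x j) ⊆ univ.filter (fun j : Fin C => (j : ℕ) < (i : ℕ)) := by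
        intro j hj
        simp only [mem_filter, mem_univ, true_and] at hj ⊢
        by_contra hji
        push_neg at hji
        have : ηs x j ≤ ηs x i := hsort i j (by rw [Fin.le_def]; omega)
        linarith
      have h2 : (univ.filter (fun j : Fin C => (j : ℕ) < (i : ℕ))).card ≤ (i : ℕ) := by
        have := Finset.card_le_card_of_injOn (fun j : Fin C => (j : ℕ))
          (s := univ.filter (fun j : Fin C => (j : ℕ) < (i : ℕ))) (t := Finset.range (i : ℕ))
          (by intro a ha; simp only [Finset.mem_coe, mem_filter, mem_univ, true_and] at ha; simpa using ha)
          (by intro a _ b _ h; exact Fin.val_injective h)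
        simpa using this
      have := Finset.card_le_card hsub
      omega
  rw [hset]
  have hm : Measurable (fun x => (univ.filter (fun k => t < η x k)).card) := by
    have : (fun x => (univ.filter (fun k => t < η x k)).card)
        = fun x => ∑ k : Fin C, if t < η x k then 1 else 0 := by
      funext x; exact Finset.card_filter _ _
    rw [this]
    apply Finset.measurable_sum
    intro k _
    exact Measurable.ite ((hη k) measurableSet_Ioi) measurable_const measurable_const
  exact hm (by trivial : MeasurableSet {n : ℕ | (i : ℕ) + 1 ≤ n})

lemma pointwise_key {C K : ℕ} (hK1 : 1 ≤ K) (hKC : 2 * K ≤ C) (lam : ℝ)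
    (v w : Fin C → ℝ)
    (hvw : ∃ σ : Equiv.Perm (Fin C), (∀ k, w k = v (σ k)) ∧ ∀ i j : Fin C, i ≤ j → w j ≤ w i)
    (B : Finset (Fin C)) (hBcard : B.card = K)
    (hBtop : ∀ k ∈ B, ∀ j, j ∉ B → v j ≤ v k)
    (Tx : Finset (Fin C)) (hT : ∀ k ∈ Tx, v k = lam) :
    ∑ j : Fin K, (max (w ⟨K + (j : ℕ), by have := j.isLt; omega⟩ - lam) 0
        + max (lam - w ⟨K - 1 - (j : ℕ), by have := j.isLt; omega⟩) 0)
      ≤ (∑ k ∈ (univ.filter (fun k => lam < v k)) ∪ Tx, v k)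
          - lam * (((univ.filter (fun k => lam < v k)) ∪ Tx).card : ℝ)
          - ((∑ k ∈ B, v k) - lam * (K : ℝ)) := by
  classical
  obtain ⟨σ, hw, hsort⟩ := hvw
  have hKleC : K ≤ C := by omega
  set Sx := (univ.filter (fun k => lam < v k)) ∪ Tx with hSxdef
  have hSxmem : ∀ k, k ∈ Sx → lam ≤ v k := by
    intro k hk
    rcases Finset.mem_union.mp hk with h | h
    · exact le_of_lt (Finset.mem_filter.mp h).2
    · exact le_of_eq (hT k h).symm
  have hSxmem' : ∀ k, k ∉ Sx → v k ≤ lam := by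
    intro k hk
    by_contra h
    exact hk (Finset.mem_union_left _ (Finset.mem_filter.mpr ⟨mem_univ _, not_le.mp h⟩))
  -- step A
  have hA : (∑ k ∈ Sx, v k) - lam * (Sx.card : ℝ) - ((∑ k ∈ B, v k) - lam * (K : ℝ))
      = (∑ k ∈ univ \ B, max (v k - lam) 0) + (∑ k ∈ B, max (lam - v k) 0) := by
    have e1 : ∑ k ∈ Sx, (v k - lam) = (∑ k ∈ Sx, v k) - lam * (Sx.card : ℝ) := by
      rw [Finset.sum_sub_distrib, Finset.sum_const, nsmul_eq_mul, mul_comm]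
    have e2 : ∑ k ∈ B, (v k - lam) = (∑ k ∈ B, v k) - lam * (K : ℝ) := by
      rw [Finset.sum_sub_distrib, Finset.sum_const, hBcard, nsmul_eq_mul, mul_comm]
    have e3 : ∑ k ∈ Sx, (v k - lam) - ∑ k ∈ B, (v k - lam)
        = ∑ k ∈ Sx \ B, (v k - lam) - ∑ k ∈ B \ Sx, (v k - lam) := by
      rw [← Finset.sum_inter_add_sum_sdiff Sx B (fun k => v k - lam),
        ← Finset.sum_inter_add_sum_sdiff B Sx (fun k => v k - lam), Finset.inter_comm]
      ring
    have e4 : ∑ k ∈ Sx \ B, (v k - lam) = ∑ k ∈ univ \ B, max (v k - lam) 0 := by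
      have c1 : ∑ k ∈ Sx \ B, (v k - lam) = ∑ k ∈ Sx \ B, max (v k - lam) 0 :=
        Finset.sum_congr rfl fun k hk =>
          (max_eq_left (by linarith [hSxmem k (Finset.mem_sdiff.mp hk).1])).symm
      rw [c1]
      apply Finset.sum_subset
      · intro k hk
        rw [Finset.mem_sdiff] at hk ⊢
        exact ⟨mem_univ _, hk.2⟩
      · intro k hk1 hk2
        rw [Finset.mem_sdiff] at hk1 hk2
        push_neg at hk2
        have hkS : k ∉ Sx := fun h => hk1.2 (hk2 h)
        have := hSxmem' k hkS
        exact max_eq_right (by linarith)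
    have e5 : ∑ k ∈ B \ Sx, (v k - lam) = - ∑ k ∈ B, max (lam - v k) 0 := by
      have c1 : ∑ k ∈ B, max (lam - v k) 0 = ∑ k ∈ B \ Sx, max (lam - v k) 0 := by
        symm
        apply Finset.sum_subset (Finset.sdiff_subset)
        intro k hk1 hk2
        rw [Finset.mem_sdiff] at hk2
        push_neg at hk2
        have hkS : k ∈ Sx := hk2 hk1
        exact max_eq_right (by linarith [hSxmem k hkS])
      have c2 : ∑ k ∈ B \ Sx, max (lam - v k) 0 = ∑ k ∈ B \ Sx, (lam - v k) :=
        Finset.sum_congr rfl fun k hk =>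
          max_eq_left (by linarith [hSxmem' k (Finset.mem_sdiff.mp hk).2])
      rw [c1, c2, ← Finset.sum_neg_distrib]
      exact (Finset.sum_congr rfl fun k _ => by ring)
    rw [← e1, ← e2, e3, e4, e5]
    ring
  -- step B : transfer to sorted values
  have hBsum : ∀ g : ℝ → ℝ, ∑ k ∈ B, g (v k)
      = ∑ i ∈ univ.filter (fun i : Fin C => (i : ℕ) < K), g (w i) := by
    intro g
    set S' := B.image σ.symm with hS'def
    have h1 : ∑ i ∈ S', g (w i) = ∑ k ∈ B, g (v k) := by
      rw [hS'def, Finset.sum_image (fun a _ b _ h => σ.symm.injective h)]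
      exact Finset.sum_congr rfl fun k _ => by rw [hw (σ.symm k), Equiv.apply_symm_apply]
    rw [← h1]
    apply sum_top_set hKleC w hsort S'
    · rw [hS'def, Finset.card_image_of_injective _ σ.symm.injective, hBcard]
    · intro i hi j hj
      have hiB : σ i ∈ B := by
        rw [hS'def, Finset.mem_image] at hi
        obtain ⟨k, hk, rfl⟩ := hi
        simpa using hk
      have hjB : σ j ∉ B := by
        intro h
        exact hj (by rw [hS'def, Finset.mem_image]; exact ⟨σ j, h, by simp⟩)
      rw [hw i, hw j]
      exact hBtop (σ i) hiB (σ j) hjB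
  have hUsum : ∀ g : ℝ → ℝ, ∑ k : Fin C, g (v k) = ∑ i : Fin C, g (w i) :=
    fun g => (Equiv.sum_comp σ (fun k => g (v k))).symm.trans
      (Finset.sum_congr rfl fun i _ => by rw [hw i])
  set Tk := univ.filter (fun i : Fin C => (i : ℕ) < K) with hTkdef
  have hcompl : ∑ k ∈ univ \ B, max (v k - lam) 0 = ∑ i ∈ univ \ Tk, max (w i - lam) 0 := by
    rw [Finset.sum_sdiff_eq_sub (Finset.subset_univ _),
      Finset.sum_sdiff_eq_sub (Finset.subset_univ _),
      hUsum (fun t => max (t - lam) 0), hBsum (fun t => max (t - lam) 0)]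
  have hBpart : ∑ k ∈ B, max (lam - v k) 0 = ∑ i ∈ Tk, max (lam - w i) 0 :=
    hBsum (fun t => max (lam - t) 0)
  -- step C : lower bounds by the straddle sums
  have hC1 : ∑ j : Fin K, max (w ⟨K + (j : ℕ), by have := j.isLt; omega⟩ - lam) 0
      ≤ ∑ i ∈ univ \ Tk, max (w i - lam) 0 := by
    have hinj : ∀ j₁ : Fin K, j₁ ∈ (univ : Finset (Fin K)) → ∀ j₂ ∈ (univ : Finset (Fin K)),
        (⟨K + (j₁ : ℕ), by have := j₁.isLt; omega⟩ : Fin C)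
          = ⟨K + (j₂ : ℕ), by have := j₂.isLt; omega⟩ → j₁ = j₂ := by
      intro j₁ _ j₂ _ h
      have := congrArg Fin.val h
      simp only at this
      exact Fin.ext (by omega)
    rw [← Finset.sum_image (f := fun i => max (w i - lam) 0) hinj]
    apply Finset.sum_le_sum_of_subset_of_nonneg
    · intro i hi
      rw [Finset.mem_image] at hi
      obtain ⟨j, _, rfl⟩ := hi
      rw [Finset.mem_sdiff]
      refine ⟨mem_univ _, ?_⟩
      rw [hTkdef, Finset.mem_filter]
      push_neg
      intro _
      simp only
      omega
    · intro _ _ _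
      exact le_max_right _ _
  have hC2 : ∑ j : Fin K, max (lam - w ⟨K - 1 - (j : ℕ), by have := j.isLt; omega⟩) 0
      ≤ ∑ i ∈ Tk, max (lam - w i) 0 := by
    have hinj : ∀ j₁ : Fin K, j₁ ∈ (univ : Finset (Fin K)) → ∀ j₂ ∈ (univ : Finset (Fin K)),
        (⟨K - 1 - (j₁ : ℕ), by have := j₁.isLt; omega⟩ : Fin C)
          = ⟨K - 1 - (j₂ : ℕ), by have := j₂.isLt; omega⟩ → j₁ = j₂ := by
      intro j₁ h₁ j₂ h₂ h
      have := congrArg Fin.val h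
      simp only at this
      have hj₁ := j₁.isLt
      have hj₂ := j₂.isLt
      exact Fin.ext (by omega)
    rw [← Finset.sum_image (f := fun i => max (lam - w i) 0) hinj]
    apply Finset.sum_le_sum_of_subset_of_nonneg
    · intro i hi
      rw [Finset.mem_image] at hi
      obtain ⟨j, _, rfl⟩ := hi
      rw [hTkdef, Finset.mem_filter]
      refine ⟨mem_univ _, ?_⟩
      simp only
      omega
    · intro _ _ _
      exact le_max_right _ _
  rw [hA, hcompl, hBpart, Finset.sum_add_distrib]
  exact add_le_add hC1 hC2

section AuxIntegration
variable {𝒳 : Type*} [MeasurableSpace 𝒳] {μ : Measure 𝒳}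

lemma integrable_of_bdd [IsFiniteMeasure μ] {f : 𝒳 → ℝ} (hf : Measurable f) (b : ℝ)
    (hb : ∀ x, |f x| ≤ b) : Integrable f μ :=
  (integrable_const b).mono' hf.aestronglyMeasurable (ae_of_all μ (fun x => by simpa using hb x))

lemma meas_selsum {C : ℕ} (η : 𝒳 → Fin C → ℝ) (hη : ∀ k, Measurable fun x => η x k)
    (S : 𝒳 → Finset (Fin C)) (hS : ∀ k, MeasurableSet {x | k ∈ S x}) :
    Measurable (fun x => ∑ k ∈ S x, η x k) := by
  classical
  have : (fun x => ∑ k ∈ S x, η x k)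
      = fun x => ∑ k : Fin C, if k ∈ S x then η x k else 0 := by
    funext x; rw [Finset.sum_ite_mem, Finset.univ_inter]
  rw [this]
  exact Finset.measurable_sum _ fun k _ => Measurable.ite (hS k) (hη k) measurable_const

lemma meas_cardsum {C : ℕ} (S : 𝒳 → Finset (Fin C)) (hS : ∀ k, MeasurableSet {x | k ∈ S x}) :
    Measurable (fun x => ((S x).card : ℝ)) := by
  classical
  have : (fun x => ((S x).card : ℝ))
      = fun x => ∑ k : Fin C, if k ∈ S x then (1 : ℝ) else 0 := by
    funext x; rw [Finset.sum_ite_mem, Finset.univ_inter]; simp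
  rw [this]
  exact Finset.measurable_sum _ fun k _ => Measurable.ite (hS k) measurable_const measurable_const

lemma max_sub_le (p q lam : ℝ) : max (p - q) 0 ≤ max (p - lam) 0 + max (lam - q) 0 :=
  max_le (by linarith [le_max_left (p - lam) 0, le_max_left (lam - q) 0])
    (add_nonneg (le_max_right _ _) (le_max_right _ _))

lemma double_int_le [IsProbabilityMeasure μ] (lam : ℝ) (a b : 𝒳 → ℝ)
    (ham : Measurable a) (hbm : Measurable b)
    (hab : ∀ x, |a x| ≤ 1) (hbb : ∀ x, |b x| ≤ 1) :
    ∫ x, ∫ x', max (a x - b x') 0 ∂μ ∂μ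
      ≤ (∫ x, max (a x - lam) 0 ∂μ) + ∫ x, max (lam - b x) 0 ∂μ := by
  have hbd2 : ∀ p q : ℝ, |p| ≤ 1 → |q| ≤ 1 → |max (p - q) 0| ≤ 2 := by
    intro p q hp hq
    rw [abs_of_nonneg (le_max_right _ _)]
    apply max_le _ (by norm_num)
    have := abs_le.mp hp; have := abs_le.mp hq; linarith [this.1]
  have hbdl : ∀ p : ℝ, |p| ≤ 1 → |max (p - lam) 0| ≤ 1 + |lam| := by
    intro p hp
    rw [abs_of_nonneg (le_max_right _ _)]
    apply max_le _ (by positivity)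
    have h1 := abs_le.mp hp
    have h2 := neg_abs_le lam
    linarith [h1.2]
  have hbdr : ∀ p : ℝ, |p| ≤ 1 → |max (lam - p) 0| ≤ 1 + |lam| := by
    intro p hp
    rw [abs_of_nonneg (le_max_right _ _)]
    apply max_le _ (by positivity)
    have h1 := abs_le.mp hp
    have h2 := le_abs_self lam
    linarith [h1.1]
  have hbint : Integrable (fun x => max (lam - b x) 0) μ :=
    integrable_of_bdd ((measurable_const.sub hbm).max measurable_const) (1 + |lam|)
      (fun x => hbdr _ (hbb x))
  have haint : Integrable (fun x => max (a x - lam) 0) μ :=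
    integrable_of_bdd ((ham.sub measurable_const).max measurable_const) (1 + |lam|)
      (fun x => hbdl _ (hab x))
  have hφm : Measurable (fun p : 𝒳 × 𝒳 => max (a p.1 - b p.2) 0) :=
    ((ham.comp measurable_fst).sub (hbm.comp measurable_snd)).max measurable_const
  have hφint : Integrable (fun p : 𝒳 × 𝒳 => max (a p.1 - b p.2) 0) (μ.prod μ) :=
    integrable_of_bdd hφm 2 (fun p => hbd2 _ _ (hab p.1) (hbb p.2))
  have houter : Integrable (fun x => ∫ x', max (a x - b x') 0 ∂μ) μ :=
    hφint.integral_prod_left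
  have hinner : ∀ x, ∫ x', max (a x - b x') 0 ∂μ
      ≤ max (a x - lam) 0 + ∫ x', max (lam - b x') 0 ∂μ := by
    intro x
    have h1 : Integrable (fun x' => max (a x - b x') 0) μ :=
      integrable_of_bdd ((measurable_const.sub hbm).max measurable_const) 2
        (fun x' => hbd2 _ _ (hab x) (hbb x'))
    have h2 : Integrable (fun x' => max (a x - lam) 0 + max (lam - b x') 0) μ :=
      (integrable_const _).add hbint
    calc ∫ x', max (a x - b x') 0 ∂μ
        ≤ ∫ x', (max (a x - lam) 0 + max (lam - b x') 0) ∂μ :=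
          integral_mono h1 h2 (fun x' => max_sub_le _ _ _)
      _ = max (a x - lam) 0 + ∫ x', max (lam - b x') 0 ∂μ := by
          rw [integral_add (integrable_const _) hbint, integral_const]
          simp
  calc ∫ x, ∫ x', max (a x - b x') 0 ∂μ ∂μ
      ≤ ∫ x, (max (a x - lam) 0 + ∫ x', max (lam - b x') 0 ∂μ) ∂μ :=
        integral_mono houter (haint.add (integrable_const _)) hinner
    _ = (∫ x, max (a x - lam) 0 ∂μ) + ∫ x, max (lam - b x) 0 ∂μ := by
        rw [integral_add haint (integrable_const _), integral_const]
        simp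

end AuxIntegration

/-- for `1 ≤ K ≤ C/2`, the adaptive gain satisfies the tighter bound
`Δ_K ≥ ∑_{k=1}^K d_{K,k}` where
`d_{K,k} = ∬ (η̃_{K+k}(x) − η̃_{K+1−k}(x'))⁺ dμ(x) dμ(x')`.
Here `j : Fin K` represents `k = j + 1`, so `η̃_{K+k}` has sorted index `K + j` and
`η̃_{K+1−k}` has sorted index `K − 1 − j`. -/
theorem stmt_9 {𝒳 : Type*} [MeasurableSpace 𝒳] (μ : Measure 𝒳) [IsProbabilityMeasure μ]
    {C : ℕ} (η : 𝒳 → Fin C → ℝ)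
    (hη : ∀ k, Measurable fun x => η x k)
    (hη0 : ∀ x k, 0 ≤ η x k) (hη1 : ∀ x, ∑ k, η x k = 1)
    (K : ℕ) (hK1 : 1 ≤ K) (hKC : 2 * K ≤ C)
    -- the decreasing rearrangement of the conditional probabilities
    (ηs : 𝒳 → Fin C → ℝ)
    (hηs : ∀ x, ∃ σ : Equiv.Perm (Fin C), (∀ k, ηs x k = η x (σ k)) ∧
      ∀ i j : Fin C, i ≤ j → ηs x j ≤ ηs x i)
    -- the optimal top-K classifier
    (StopK : 𝒳 → Finset (Fin C))
    (hS_meas : ∀ k, MeasurableSet {x | k ∈ StopK x})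
    (hS_card : ∀ x, (StopK x).card = K)
    (hS_top : ∀ x, ∀ k ∈ StopK x, ∀ j, j ∉ StopK x → η x j ≤ η x k)
    -- the tie-breaking part of the optimal average-K classifier, assumed to exist
    (T : 𝒳 → Finset (Fin C))
    (hT_meas : ∀ k, MeasurableSet {x | k ∈ T x})
    (hT_tie : ∀ x, ∀ k ∈ T x, η x k = lamThresh μ η (K : ℝ))
    (hT_size : avgSize μ T = (K : ℝ) - avgSize μ (Splus μ η (K : ℝ))) :
    errRate μ η StopK - errRate μ η (fun x => Splus μ η (K : ℝ) x ∪ T x)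
      ≥ ∑ j : Fin K, ∫ x, ∫ x',
          max (ηs x ⟨K + (j : ℕ), by have := j.isLt; omega⟩
            - ηs x' ⟨K - 1 - (j : ℕ), by have := j.isLt; omega⟩) 0 ∂μ ∂μ := by
  classical
  set lam := lamThresh μ η (K : ℝ) with hlamdef
  set Sx : 𝒳 → Finset (Fin C) := fun x => Splus μ η (K : ℝ) x ∪ T x with hSxdef
  have hSpfilter : ∀ x, Splus μ η (K : ℝ) x = univ.filter (fun k => lam < η x k) :=
    fun x => rfl
  -- basic bounds
  have hle1 : ∀ x k, η x k ≤ 1 := by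
    intro x k
    calc η x k ≤ ∑ k, η x k := Finset.single_le_sum (fun k _ => hη0 x k) (mem_univ k)
      _ = 1 := hη1 x
  have hs_abs : ∀ x (i : Fin C), |ηs x i| ≤ 1 := by
    intro x i
    obtain ⟨σ, hσ, _⟩ := hηs x
    rw [hσ, abs_of_nonneg (hη0 x _)]
    exact hle1 x _
  have hms : ∀ i : Fin C, Measurable fun x => ηs x i := sorted_meas η hη ηs hηs
  -- measurability of the union classifier
  have hSxmeas : ∀ k, MeasurableSet {x | k ∈ Sx x} := by
    intro k
    have heq : {x | k ∈ Sx x} = {x | lam < η x k} ∪ {x | k ∈ T x} := by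
      ext x
      simp only [hSxdef, Set.mem_setOf_eq, Finset.mem_union, Set.mem_union, hSpfilter,
        Finset.mem_filter, Finset.mem_univ, true_and]
    rw [heq]
    exact (measurableSet_lt measurable_const (hη k)).union (hT_meas k)
  -- boundedness of selection sums
  have hselbd : ∀ (S : Finset (Fin C)) x, |∑ k ∈ S, η x k| ≤ 1 := by
    intro S x
    rw [abs_le]
    constructor
    · have : (0:ℝ) ≤ ∑ k ∈ S, η x k := Finset.sum_nonneg fun k _ => hη0 x k
      linarith
    · calc ∑ k ∈ S, η x k ≤ ∑ k, η x k :=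
          Finset.sum_le_sum_of_subset_of_nonneg (Finset.subset_univ S) (fun k _ _ => hη0 x k)
        _ = 1 := hη1 x
  have hcardbd : ∀ (S : Finset (Fin C)), |((S.card : ℕ) : ℝ)| ≤ (C : ℝ) := by
    intro S
    rw [abs_of_nonneg (by positivity)]
    exact_mod_cast (Finset.card_le_univ S).trans_eq (by simp)
  -- integrability
  have hiF1 : Integrable (fun x => ∑ k ∈ StopK x, η x k) μ :=
    integrable_of_bdd (meas_selsum η hη StopK hS_meas) 1 (fun x => hselbd _ x)
  have hiF2 : Integrable (fun x => ∑ k ∈ Sx x, η x k) μ :=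
    integrable_of_bdd (meas_selsum η hη Sx hSxmeas) 1 (fun x => hselbd _ x)
  have hiCSx : Integrable (fun x => ((Sx x).card : ℝ)) μ :=
    integrable_of_bdd (meas_cardsum Sx hSxmeas) C (fun x => hcardbd _)
  have hiCSp : Integrable (fun x => ((Splus μ η (K : ℝ) x).card : ℝ)) μ := by
    refine integrable_of_bdd (meas_cardsum _ ?_) C (fun x => hcardbd _)
    intro k
    have heq : {x | k ∈ Splus μ η (K : ℝ) x} = {x | lam < η x k} := by
      ext x
      simp only [Set.mem_setOf_eq, hSpfilter, Finset.mem_filter, Finset.mem_univ, true_and]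
    rw [heq]
    exact measurableSet_lt measurable_const (hη k)
  have hiCT : Integrable (fun x => ((T x).card : ℝ)) μ :=
    integrable_of_bdd (meas_cardsum T hT_meas) C (fun x => hcardbd _)
  -- the average size of the union is K
  have hintcard : ∫ x, ((Sx x).card : ℝ) ∂μ = (K : ℝ) := by
    have hsplit : ∀ x, ((Sx x).card : ℝ)
        = ((Splus μ η (K : ℝ) x).card : ℝ) + ((T x).card : ℝ) := by
      intro x
      have hdisj : Disjoint (Splus μ η (K : ℝ) x) (T x) := by
        rw [Finset.disjoint_left]
        intro k hk hkT
        rw [hSpfilter, Finset.mem_filter] at hk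
        have := hT_tie x k hkT
        linarith [hk.2]
      rw [hSxdef]
      simp only
      rw [Finset.card_union_of_disjoint hdisj]
      push_cast
      ring
    calc ∫ x, ((Sx x).card : ℝ) ∂μ
        = ∫ x, (((Splus μ η (K : ℝ) x).card : ℝ) + ((T x).card : ℝ)) ∂μ := by
          exact integral_congr_ae (ae_of_all μ hsplit)
      _ = avgSize μ (Splus μ η (K : ℝ)) + avgSize μ T := integral_add hiCSp hiCT
      _ = (K : ℝ) := by rw [hT_size]; ring
  -- error rate difference as a single integral
  have herr : errRate μ η StopK - errRate μ η Sx
      = ∫ x, ((∑ k ∈ Sx x, η x k) - ∑ k ∈ StopK x, η x k) ∂μ := by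
    rw [errRate, errRate, integral_sub (integrable_const 1) hiF1,
      integral_sub (integrable_const 1) hiF2, integral_sub hiF2 hiF1]
    ring
  -- pointwise inequality
  have hpt : ∀ x, (∑ j : Fin K,
        (max (ηs x ⟨K + (j : ℕ), by have := j.isLt; omega⟩ - lam) 0
          + max (lam - ηs x ⟨K - 1 - (j : ℕ), by have := j.isLt; omega⟩) 0))
      ≤ (∑ k ∈ Sx x, η x k) - (∑ k ∈ StopK x, η x k)
          - lam * (((Sx x).card : ℝ) - (K : ℝ)) := by
    intro x
    have h := pointwise_key hK1 hKC lam (η x) (ηs x) (hηs x) (StopK x) (hS_card x)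
      (fun k hk j hj => hS_top x k hk j hj) (T x)
      (fun k hk => hT_tie x k hk)
    have hfilt : (univ.filter (fun k => lam < η x k)) ∪ T x = Sx x := by
      rw [hSxdef]; simp only [hSpfilter]
    rw [hfilt] at h
    linarith [h]
  -- integrability of the straddle terms
  have hiMax1 : ∀ i : Fin C, Integrable (fun x => max (ηs x i - lam) 0) μ := by
    intro i
    refine integrable_of_bdd (((hms i).sub measurable_const).max measurable_const)
      (1 + |lam|) (fun x => ?_)
    rw [abs_of_nonneg (le_max_right _ _)]
    apply max_le _ (by positivity)
    have h1 := abs_le.mp (hs_abs x i)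
    have h2 := neg_abs_le lam
    linarith [h1.2]
  have hiMax2 : ∀ i : Fin C, Integrable (fun x => max (lam - ηs x i) 0) μ := by
    intro i
    refine integrable_of_bdd ((measurable_const.sub (hms i)).max measurable_const)
      (1 + |lam|) (fun x => ?_)
    rw [abs_of_nonneg (le_max_right _ _)]
    apply max_le _ (by positivity)
    have h1 := abs_le.mp (hs_abs x i)
    have h2 := le_abs_self lam
    linarith [h1.1]
  have hiG : Integrable (fun x => ∑ j : Fin K,
      (max (ηs x ⟨K + (j : ℕ), by have := j.isLt; omega⟩ - lam) 0
        + max (lam - ηs x ⟨K - 1 - (j : ℕ), by have := j.isLt; omega⟩) 0)) μ :=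
    integrable_finset_sum _ (fun j _ => (hiMax1 _).add (hiMax2 _))
  have hiRHS : Integrable (fun x => (∑ k ∈ Sx x, η x k) - (∑ k ∈ StopK x, η x k)
      - lam * (((Sx x).card : ℝ) - (K : ℝ))) μ :=
    (hiF2.sub hiF1).sub ((hiCSx.sub (integrable_const _)).const_mul lam)
  -- the correction term integrates to zero
  have hzero : ∫ x, lam * (((Sx x).card : ℝ) - (K : ℝ)) ∂μ = 0 := by
    rw [integral_const_mul, integral_sub hiCSx (integrable_const _), hintcard, integral_const]
    simp
  -- putting the chain together
  have hGle : ∫ x, (∑ j : Fin K,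
        (max (ηs x ⟨K + (j : ℕ), by have := j.isLt; omega⟩ - lam) 0
          + max (lam - ηs x ⟨K - 1 - (j : ℕ), by have := j.isLt; omega⟩) 0)) ∂μ
      ≤ errRate μ η StopK - errRate μ η Sx := by
    rw [herr]
    calc ∫ x, (∑ j : Fin K,
          (max (ηs x ⟨K + (j : ℕ), by have := j.isLt; omega⟩ - lam) 0
            + max (lam - ηs x ⟨K - 1 - (j : ℕ), by have := j.isLt; omega⟩) 0)) ∂μ
        ≤ ∫ x, ((∑ k ∈ Sx x, η x k) - (∑ k ∈ StopK x, η x k)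
            - lam * (((Sx x).card : ℝ) - (K : ℝ))) ∂μ := integral_mono hiG hiRHS hpt
      _ = (∫ x, ((∑ k ∈ Sx x, η x k) - ∑ k ∈ StopK x, η x k) ∂μ)
            - ∫ x, lam * (((Sx x).card : ℝ) - (K : ℝ)) ∂μ :=
          integral_sub (hiF2.sub hiF1) ((hiCSx.sub (integrable_const _)).const_mul lam)
      _ = ∫ x, ((∑ k ∈ Sx x, η x k) - ∑ k ∈ StopK x, η x k) ∂μ := by rw [hzero]; ring
  -- split the integral of the straddle sum
  have hGsplit : ∫ x, (∑ j : Fin K,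
        (max (ηs x ⟨K + (j : ℕ), by have := j.isLt; omega⟩ - lam) 0
          + max (lam - ηs x ⟨K - 1 - (j : ℕ), by have := j.isLt; omega⟩) 0)) ∂μ
      = ∑ j : Fin K, ((∫ x, max (ηs x ⟨K + (j : ℕ), by have := j.isLt; omega⟩ - lam) 0 ∂μ)
          + ∫ x, max (lam - ηs x ⟨K - 1 - (j : ℕ), by have := j.isLt; omega⟩) 0 ∂μ) := by
    rw [integral_finset_sum (univ : Finset (Fin K))
      (f := fun (j : Fin K) (x : 𝒳) =>
        max (ηs x ⟨K + (j : ℕ), by have := j.isLt; omega⟩ - lam) 0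
          + max (lam - ηs x ⟨K - 1 - (j : ℕ), by have := j.isLt; omega⟩) 0)
      (fun j _ => (hiMax1 _).add (hiMax2 _))]
    exact Finset.sum_congr rfl fun j _ => integral_add (hiMax1 _) (hiMax2 _)
  -- per-index double-integral bound
  have hdouble : ∀ j : Fin K,
      ∫ x, ∫ x', max (ηs x ⟨K + (j : ℕ), by have := j.isLt; omega⟩
          - ηs x' ⟨K - 1 - (j : ℕ), by have := j.isLt; omega⟩) 0 ∂μ ∂μ
      ≤ (∫ x, max (ηs x ⟨K + (j : ℕ), by have := j.isLt; omega⟩ - lam) 0 ∂μ)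
          + ∫ x, max (lam - ηs x ⟨K - 1 - (j : ℕ), by have := j.isLt; omega⟩) 0 ∂μ := by
    intro j
    exact double_int_le lam _ _ (hms _) (hms _) (fun x => hs_abs x _) (fun x => hs_abs x _)
  rw [ge_iff_le]
  calc ∑ j : Fin K, ∫ x, ∫ x',
        max (ηs x ⟨K + (j : ℕ), by have := j.isLt; omega⟩
          - ηs x' ⟨K - 1 - (j : ℕ), by have := j.isLt; omega⟩) 0 ∂μ ∂μ
      ≤ ∑ j : Fin K, ((∫ x, max (ηs x ⟨K + (j : ℕ), by have := j.isLt; omega⟩ - lam) 0 ∂μ)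
          + ∫ x, max (lam - ηs x ⟨K - 1 - (j : ℕ), by have := j.isLt; omega⟩) 0 ∂μ) :=
        Finset.sum_le_sum (fun j _ => hdouble j)
    _ = _ := hGsplit.symm
    _ ≤ errRate μ η StopK - errRate μ η Sx := hGle
end

section
/- Let K ∈ {1,…,C} be a fixed set size and let η̂ : 𝒳 → ℝ^C be a measurable estimator with η̂_k(x) ≥ 0 and ∑_k η̂_k(x) = 1. Let Ŝ_K be the top-K plug-in classifier built from η̂, mapping each x to a set of K indices realizing the K largest values among η̂_1(x),…,η̂_C(x). Then ℰ(Ŝ_K) − ℰ(S_K^*) ≤ ∫ ∑_{k=1}^C |η_k(x) − η̂_k(x)| dμ(x). -/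
open MeasureTheory Finset

/-- Pointwise key lemma: if `A` and `B` have the same cardinality and `B` consists of
top values for `b`, then `∑_A a - ∑_B a ≤ ∑_k |a k - b k|`. -/
lemma pointwise_key_s10 {C : ℕ} (a b : Fin C → ℝ) (A B : Finset (Fin C))
    (hcard : A.card = B.card)
    (htop : ∀ k ∈ B, ∀ j, j ∉ B → b j ≤ b k) :
    ∑ k ∈ A, a k - ∑ k ∈ B, a k ≤ ∑ k : Fin C, |a k - b k| := by
  have hsplitA : ∑ k ∈ A ∩ B, a k + ∑ k ∈ A \ B, a k = ∑ k ∈ A, a k :=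
    Finset.sum_inter_add_sum_sdiff A B a
  have hsplitB : ∑ k ∈ B ∩ A, a k + ∑ k ∈ B \ A, a k = ∑ k ∈ B, a k :=
    Finset.sum_inter_add_sum_sdiff B A a
  have hinter : A ∩ B = B ∩ A := Finset.inter_comm A B
  have hdiff : ∑ k ∈ A, a k - ∑ k ∈ B, a k
      = ∑ k ∈ A \ B, a k - ∑ k ∈ B \ A, a k := by
    rw [← hsplitA, ← hsplitB, hinter]; ring
  rw [hdiff]
  have hcardd : (A \ B).card = (B \ A).card := by
    have h1 := Finset.card_sdiff_add_card_inter A B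
    have h2 := Finset.card_sdiff_add_card_inter B A
    rw [hinter] at h1
    omega
  -- ∑_{A\B} b ≤ ∑_{B\A} b
  have hb : ∑ k ∈ A \ B, b k ≤ ∑ k ∈ B \ A, b k := by
    rcases Finset.eq_empty_or_nonempty (B \ A) with he | hne
    · have : A \ B = ∅ := Finset.card_eq_zero.mp (by rw [hcardd, he]; simp)
      simp [this, he]
    · obtain ⟨k0, hk0, hk0min⟩ := Finset.exists_min_image (B \ A) b hne
      have hk0B : k0 ∈ B := (Finset.mem_sdiff.mp hk0).1
      have h1 : ∑ k ∈ A \ B, b k ≤ (A \ B).card • b k0 :=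
        Finset.sum_le_card_nsmul _ _ _ (fun j hj =>
          htop k0 hk0B j (Finset.mem_sdiff.mp hj).2)
      have h2 : (B \ A).card • b k0 ≤ ∑ k ∈ B \ A, b k :=
        Finset.card_nsmul_le_sum _ _ _ (fun k hk => hk0min k hk)
      rw [hcardd] at h1
      exact h1.trans h2
  have h3 : ∑ k ∈ A \ B, a k - ∑ k ∈ B \ A, a k
      ≤ (∑ k ∈ A \ B, |a k - b k| + ∑ k ∈ B \ A, |a k - b k|)
        + (∑ k ∈ A \ B, b k - ∑ k ∈ B \ A, b k) := by
    have hA : ∑ k ∈ A \ B, a k ≤ ∑ k ∈ A \ B, |a k - b k| + ∑ k ∈ A \ B, b k := by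
      rw [← Finset.sum_add_distrib]
      exact Finset.sum_le_sum fun k _ => by
        have := abs_nonneg (a k - b k); have := le_abs_self (a k - b k); linarith
    have hB : ∑ k ∈ B \ A, b k - ∑ k ∈ B \ A, |a k - b k| ≤ ∑ k ∈ B \ A, a k := by
      rw [← Finset.sum_sub_distrib]
      exact Finset.sum_le_sum fun k _ => by
        have := neg_abs_le (a k - b k); linarith
    linarith
  have h4 : ∑ k ∈ A \ B, |a k - b k| + ∑ k ∈ B \ A, |a k - b k|
      ≤ ∑ k : Fin C, |a k - b k| := by
    rw [← Finset.sum_union (disjoint_sdiff_sdiff)]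
    exact Finset.sum_le_sum_of_subset_of_nonneg (Finset.subset_univ _)
      (fun k _ _ => abs_nonneg _)
  linarith

lemma sum_mem_eq {C : ℕ} {𝒳 : Type*} (η : 𝒳 → Fin C → ℝ) (S : 𝒳 → Finset (Fin C))
    (x : 𝒳) : ∑ k ∈ S x, η x k = ∑ k : Fin C, if k ∈ S x then η x k else 0 := by
  rw [Finset.sum_ite_mem, Finset.univ_inter]

/-- Thm. on top-K plug-in regret: for any measurable estimator `ηh` (η̂)
taking values in the simplex, the top-K plug-in classifier `Ŝ_K` built from `ηh` satisfies
`ℰ(Ŝ_K) − ℰ(S_K^*) ≤ ∫ ∑_k |η_k(x) − η̂_k(x)| dμ(x)`. -/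
theorem stmt_10 {𝒳 : Type*} [MeasurableSpace 𝒳] (μ : Measure 𝒳) [IsProbabilityMeasure μ]
    {C : ℕ} (η : 𝒳 → Fin C → ℝ)
    (hη : ∀ k, Measurable fun x => η x k)
    (hη0 : ∀ x k, 0 ≤ η x k) (hη1 : ∀ x, ∑ k, η x k = 1)
    (K : ℕ) (hK1 : 1 ≤ K) (hKC : K ≤ C)
    -- measurable estimator of the conditional probabilities
    (ηh : 𝒳 → Fin C → ℝ)
    (hηh : ∀ k, Measurable fun x => ηh x k)
    (hηh0 : ∀ x k, 0 ≤ ηh x k) (hηh1 : ∀ x, ∑ k, ηh x k = 1)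
    -- the optimal top-K classifier for η
    (StopK : 𝒳 → Finset (Fin C))
    (hS_meas : ∀ k, MeasurableSet {x | k ∈ StopK x})
    (hS_card : ∀ x, (StopK x).card = K)
    (hS_top : ∀ x, ∀ k ∈ StopK x, ∀ j, j ∉ StopK x → η x j ≤ η x k)
    -- the top-K plug-in classifier built from ηh
    (Shat : 𝒳 → Finset (Fin C))
    (hShat_meas : ∀ k, MeasurableSet {x | k ∈ Shat x})
    (hShat_card : ∀ x, (Shat x).card = K)
    (hShat_top : ∀ x, ∀ k ∈ Shat x, ∀ j, j ∉ Shat x → ηh x j ≤ ηh x k) :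
    errRate μ η Shat - errRate μ η StopK ≤ ∫ x, ∑ k : Fin C, |η x k - ηh x k| ∂μ := by
  classical
  -- the selected-sum functions
  set f : 𝒳 → ℝ := fun x => ∑ k ∈ StopK x, η x k with hf
  set g : 𝒳 → ℝ := fun x => ∑ k ∈ Shat x, η x k with hg
  set h : 𝒳 → ℝ := fun x => ∑ k : Fin C, |η x k - ηh x k| with hh
  have meas_sum : ∀ (S : 𝒳 → Finset (Fin C)), (∀ k, MeasurableSet {x | k ∈ S x}) →
      Measurable (fun x => ∑ k ∈ S x, η x k) := by
    intro S hS
    have : (fun x => ∑ k ∈ S x, η x k)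
        = fun x => ∑ k : Fin C, if k ∈ S x then η x k else 0 := by
      funext x; exact sum_mem_eq η S x
    rw [this]
    exact Finset.measurable_sum _ fun k _ => Measurable.ite (hS k) (hη k) measurable_const
  have hfm : Measurable f := meas_sum StopK hS_meas
  have hgm : Measurable g := meas_sum Shat hShat_meas
  have hbnd : ∀ (S : 𝒳 → Finset (Fin C)) x, |∑ k ∈ S x, η x k| ≤ 1 := by
    intro S x
    have h0 : 0 ≤ ∑ k ∈ S x, η x k := Finset.sum_nonneg fun k _ => hη0 x k
    have h1 : ∑ k ∈ S x, η x k ≤ ∑ k : Fin C, η x k :=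
      Finset.sum_le_sum_of_subset_of_nonneg (Finset.subset_univ _) fun k _ _ => hη0 x k
    rw [hη1 x] at h1
    rw [abs_le]; constructor <;> linarith
  have hfi : Integrable f μ :=
    (integrable_const (1:ℝ)).mono' hfm.aestronglyMeasurable
      (Filter.Eventually.of_forall fun x => hbnd StopK x)
  have hgi : Integrable g μ :=
    (integrable_const (1:ℝ)).mono' hgm.aestronglyMeasurable
      (Filter.Eventually.of_forall fun x => hbnd Shat x)
  have hhm : Measurable h :=
    Finset.measurable_sum _ fun k _ => ((hη k).sub (hηh k)).abs
  have hhi : Integrable h μ := by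
    refine (integrable_const (2:ℝ)).mono' hhm.aestronglyMeasurable
      (Filter.Eventually.of_forall fun x => ?_)
    have h0 : 0 ≤ h x := Finset.sum_nonneg fun k _ => abs_nonneg _
    have h1 : h x ≤ 2 := by
      have : ∀ k ∈ Finset.univ, |η x k - ηh x k| ≤ η x k + ηh x k := fun k _ => by
        rw [abs_le]; constructor <;> [skip; skip] <;> nlinarith [hη0 x k, hηh0 x k]
      calc h x ≤ ∑ k : Fin C, (η x k + ηh x k) := Finset.sum_le_sum this
        _ = 2 := by rw [Finset.sum_add_distrib, hη1 x, hηh1 x]; norm_num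
    rw [Real.norm_eq_abs, abs_le]; constructor <;> linarith
  have key : ∀ x, f x - g x ≤ h x := fun x =>
    pointwise_key_s10 (η x) (ηh x) (StopK x) (Shat x)
      (by rw [hS_card x, hShat_card x]) (fun k hk j hj => hShat_top x k hk j hj)
  have herr : errRate μ η Shat - errRate μ η StopK = ∫ x, (f x - g x) ∂μ := by
    unfold errRate
    rw [integral_sub hfi hgi, integral_sub (integrable_const 1) hgi,
      integral_sub (integrable_const 1) hfi]
    ring
  rw [herr]
  exact integral_mono (hfi.sub hgi) hhi key
end

section
/- Let l be a μ₀-strongly proper loss on the C-dimensional probability simplex and let η̂ : 𝒳 → Δ_C be a measurable estimator. Then the ℓ¹ estimation error is controlled by the surrogate regret: ∫ ∑_{k=1}^C |η_k(x) − η̂_k(x)| dμ(x) ≤ √( (2/μ₀) · Reg_l(η̂) ), where Reg_l(η̂) = ∫ [ L_l(η(x), η̂(x)) − L_l(η(x), η(x)) ] dμ(x). -/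
open MeasureTheory Finset

/-- The probability simplex `Δ_C = {p ∈ ℝ^C : p_k ≥ 0, ∑_k p_k = 1}`. -/
def simplex (C : ℕ) : Set (Fin C → ℝ) := {p | (∀ k, 0 ≤ p k) ∧ ∑ k, p k = 1}

/-- Conditional risk `L_l(p, q) = ∑_k p_k l(k, q)` of a loss `l`. -/
noncomputable def condRisk {C : ℕ} (l : Fin C → (Fin C → ℝ) → ℝ) (p q : Fin C → ℝ) : ℝ :=
  ∑ k, p k * l k q

/-- A loss is `μ₀`-strongly proper if
`L_l(p,q) − L_l(p,p) ≥ (μ₀/2) ‖p − q‖₁²` for all `p, q` in the simplex. -/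
def StronglyProper {C : ℕ} (μ₀ : ℝ) (l : Fin C → (Fin C → ℝ) → ℝ) : Prop :=
  ∀ p ∈ simplex C, ∀ q ∈ simplex C,
    condRisk l p q - condRisk l p p ≥ μ₀ / 2 * (∑ k, |p k - q k|) ^ 2

/-- if `l` is `μ₀`-strongly proper and `ηh` (η̂) is a measurable estimator
taking values in the simplex, then
`∫ ∑_k |η_k − η̂_k| dμ ≤ √((2/μ₀) · Reg_l(η̂))` where
`Reg_l(η̂) = ∫ [L_l(η(x), η̂(x)) − L_l(η(x), η(x))] dμ(x)`. -/
theorem stmt_12 {𝒳 : Type*} [MeasurableSpace 𝒳] (μ : Measure 𝒳) [IsProbabilityMeasure μ]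
    {C : ℕ} (l : Fin C → (Fin C → ℝ) → ℝ) (μ₀ : ℝ) (hμ₀ : 0 < μ₀)
    (hl : StronglyProper μ₀ l)
    (η ηh : 𝒳 → Fin C → ℝ)
    (hη : ∀ k, Measurable fun x => η x k) (hηh : ∀ k, Measurable fun x => ηh x k)
    (hηΔ : ∀ x, η x ∈ simplex C) (hηhΔ : ∀ x, ηh x ∈ simplex C)
    (hint : Integrable (fun x => condRisk l (η x) (ηh x) - condRisk l (η x) (η x)) μ) :
    ∫ x, ∑ k : Fin C, |η x k - ηh x k| ∂μ
      ≤ Real.sqrt ((2 / μ₀)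
          * ∫ x, (condRisk l (η x) (ηh x) - condRisk l (η x) (η x)) ∂μ) := by
  set f : 𝒳 → ℝ := fun x => ∑ k : Fin C, |η x k - ηh x k| with hf
  set g : 𝒳 → ℝ := fun x => condRisk l (η x) (ηh x) - condRisk l (η x) (η x) with hg
  have hf_nonneg : ∀ x, 0 ≤ f x := fun x => Finset.sum_nonneg fun k _ => abs_nonneg _
  have hf_meas : Measurable f :=
    Finset.measurable_sum _ fun k _ => ((hη k).sub (hηh k)).abs
  have hf_bdd : ∀ x, f x ≤ 2 := by
    intro x
    have : f x ≤ ∑ k : Fin C, (η x k + ηh x k) := by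
      apply Finset.sum_le_sum
      intro k _
      have h1 := (hηΔ x).1 k
      have h2 := (hηhΔ x).1 k
      rw [abs_le]; constructor <;> nlinarith
    rw [Finset.sum_add_distrib, (hηΔ x).2, (hηhΔ x).2] at this
    linarith
  have hkey : ∀ x, f x ^ 2 ≤ (2 / μ₀) * g x := by
    intro x
    have := hl (η x) (hηΔ x) (ηh x) (hηhΔ x)
    have h2 : μ₀ / 2 * f x ^ 2 ≤ g x := this
    calc f x ^ 2 = (2 / μ₀) * (μ₀ / 2 * f x ^ 2) := by field_simp
    _ ≤ (2 / μ₀) * g x := by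
        apply mul_le_mul_of_nonneg_left h2 (by positivity)
  have hf2 : MemLp f 2 μ := by
    apply MemLp.of_bound hf_meas.aestronglyMeasurable 2
    filter_upwards with x
    rw [Real.norm_of_nonneg (hf_nonneg x)]; exact hf_bdd x
  have hfsq_int : Integrable (fun x => f x ^ 2) μ := by
    simpa [pow_two] using hf2.integrable_sq
  have h1 : ∫ x, f x ∂μ ≤ Real.sqrt (∫ x, f x ^ 2 ∂μ) := by
    have hone : MemLp (fun _ : 𝒳 => (1:ℝ)) 2 μ := memLp_const 1
    have hpq : (2:ℝ).HolderConjugate 2 := Real.HolderConjugate.two_two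
    have := integral_mul_le_Lp_mul_Lq_of_nonneg (μ := μ) hpq
      (Filter.Eventually.of_forall hf_nonneg)
      (Filter.Eventually.of_forall fun x => zero_le_one)
      (by simpa using hf2) (by simpa using hone)
    simp only [mul_one, one_pow, integral_const, measure_univ, ENNReal.toReal_one, one_smul,
      Real.one_rpow] at this
    have heq : (fun x => f x ^ (2:ℝ)) = fun x => f x ^ 2 := by
      funext x
      rw [show ((2:ℝ)) = ((2:ℕ):ℝ) by norm_num, Real.rpow_natCast]
    calc ∫ x, f x ∂μ ≤ (∫ x, f x ^ (2:ℝ) ∂μ) ^ (1/(2:ℝ)) := by simpa using this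
    _ = Real.sqrt (∫ x, f x ^ 2 ∂μ) := by
        rw [Real.sqrt_eq_rpow, show (fun x => f x ^ (2:ℝ)) = fun x => f x ^ 2 from heq]
  have h2 : ∫ x, f x ^ 2 ∂μ ≤ (2 / μ₀) * ∫ x, g x ∂μ := by
    rw [← integral_const_mul]
    exact integral_mono hfsq_int (hint.const_mul _) hkey
  calc ∫ x, f x ∂μ ≤ Real.sqrt (∫ x, f x ^ 2 ∂μ) := h1
  _ ≤ Real.sqrt ((2 / μ₀) * ∫ x, g x ∂μ) := Real.sqrt_le_sqrt h2
end

section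
/- Every strongly proper loss is consistent for top-K classification: if l is a μ₀-strongly proper loss and (η̂_n) is a sequence of measurable estimators η̂_n : 𝒳 → Δ_C with surrogate regret Reg_l(η̂_n) = ∫ [L_l(η(x), η̂_n(x)) − L_l(η(x), η(x))] dμ(x) tending to 0, then the top-K error of the plug-in classifiers Ŝ_{K,n} built from η̂_n converges to the optimal top-K error: ℰ(Ŝ_{K,n}) − ℰ(S_K^*) → 0. -/
open MeasureTheory Finset

lemma sum_top_exchange {C : ℕ} (f : Fin C → ℝ) (A B : Finset (Fin C))
    (hcard : A.card = B.card)
    (htop : ∀ b ∈ B, ∀ j, j ∉ B → f j ≤ f b) :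
    ∑ a ∈ A, f a ≤ ∑ b ∈ B, f b := by
  have hA : ∑ a ∈ A, f a = ∑ a ∈ A \ B, f a + ∑ a ∈ A ∩ B, f a := by
    rw [← Finset.sum_union (Finset.disjoint_sdiff_inter A B), Finset.sdiff_union_inter]
  have hB : ∑ b ∈ B, f b = ∑ b ∈ B \ A, f b + ∑ b ∈ B ∩ A, f b := by
    rw [← Finset.sum_union (Finset.disjoint_sdiff_inter B A), Finset.sdiff_union_inter]
  have hm : (A \ B).card = (B \ A).card := Finset.card_sdiff_comm hcard
  have hmain : ∑ a ∈ A \ B, f a ≤ ∑ b ∈ B \ A, f b := by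
    by_cases h0 : (A \ B).card = 0
    · have h1 : A \ B = ∅ := Finset.card_eq_zero.mp h0
      have h2 : B \ A = ∅ := Finset.card_eq_zero.mp (hm ▸ h0)
      simp [h1, h2]
    · have key : ∀ b ∈ B \ A, ∑ a ∈ A \ B, f a ≤ ((A \ B).card : ℝ) * f b := by
        intro b hb
        have hb' := Finset.mem_sdiff.mp hb
        calc ∑ a ∈ A \ B, f a ≤ ∑ _a ∈ A \ B, f b :=
              Finset.sum_le_sum fun a ha => htop b hb'.1 a (Finset.mem_sdiff.mp ha).2
          _ = _ := by rw [Finset.sum_const, nsmul_eq_mul]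
      have h2 : ((A \ B).card : ℝ) * ∑ a ∈ A \ B, f a
          ≤ ((A \ B).card : ℝ) * ∑ b ∈ B \ A, f b := by
        calc ((A \ B).card : ℝ) * ∑ a ∈ A \ B, f a
            = ∑ _b ∈ B \ A, ∑ a ∈ A \ B, f a := by
              rw [Finset.sum_const, nsmul_eq_mul, ← hm]
          _ ≤ ∑ b ∈ B \ A, ((A \ B).card : ℝ) * f b := Finset.sum_le_sum key
          _ = _ := by rw [← Finset.mul_sum]
      have hpos : (0 : ℝ) < ((A \ B).card : ℝ) := by
        exact_mod_cast Nat.pos_of_ne_zero h0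
      exact le_of_mul_le_mul_left h2 hpos
  rw [hA, hB, Finset.inter_comm]
  exact add_le_add_left hmain _

lemma aux_mul_bound (μ₀ ε' T G : ℝ) (hμ₀ : 0 < μ₀) (h : ε' < T) (hT0 : 0 ≤ T)
    (hG : μ₀ / 2 * T ^ 2 ≤ G) : T * (μ₀ * ε') ≤ 2 * G := by
  have hstep : μ₀ * T * ε' ≤ μ₀ * T * T :=
    mul_le_mul_of_nonneg_left h.le (mul_nonneg hμ₀.le hT0)
  nlinarith [hG, hstep]

/-- consistency of strongly proper losses for top-K classification:
if `l` is `μ₀`-strongly proper and the surrogate regrets `Reg_l(η̂_n)` of measurable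
simplex-valued estimators tend to `0`, then the top-K error of the plug-in classifiers
built from `η̂_n` converges to the optimal top-K error. -/
theorem stmt_13 {𝒳 : Type*} [MeasurableSpace 𝒳] (μ : Measure 𝒳) [IsProbabilityMeasure μ]
    {C : ℕ} (l : Fin C → (Fin C → ℝ) → ℝ) (μ₀ : ℝ) (hμ₀ : 0 < μ₀)
    (hl : StronglyProper μ₀ l)
    (η : 𝒳 → Fin C → ℝ)
    (hη : ∀ k, Measurable fun x => η x k) (hηΔ : ∀ x, η x ∈ simplex C)
    (K : ℕ) (hK1 : 1 ≤ K) (hKC : K ≤ C)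
    -- the sequence of estimators
    (ηh : ℕ → 𝒳 → Fin C → ℝ)
    (hηh : ∀ n k, Measurable fun x => ηh n x k) (hηhΔ : ∀ n x, ηh n x ∈ simplex C)
    (hint : ∀ n, Integrable
      (fun x => condRisk l (η x) (ηh n x) - condRisk l (η x) (η x)) μ)
    (hreg : Filter.Tendsto
      (fun n => ∫ x, (condRisk l (η x) (ηh n x) - condRisk l (η x) (η x)) ∂μ)
      Filter.atTop (nhds 0))
    -- the optimal top-K classifier for η
    (StopK : 𝒳 → Finset (Fin C))
    (hS_meas : ∀ k, MeasurableSet {x | k ∈ StopK x})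
    (hS_card : ∀ x, (StopK x).card = K)
    (hS_top : ∀ x, ∀ k ∈ StopK x, ∀ j, j ∉ StopK x → η x j ≤ η x k)
    -- the top-K plug-in classifiers built from the estimators
    (Shat : ℕ → 𝒳 → Finset (Fin C))
    (hShat_meas : ∀ n k, MeasurableSet {x | k ∈ Shat n x})
    (hShat_card : ∀ n x, (Shat n x).card = K)
    (hShat_top : ∀ n x, ∀ k ∈ Shat n x, ∀ j, j ∉ Shat n x → ηh n x j ≤ ηh n x k) :
    Filter.Tendsto (fun n => errRate μ η (Shat n) - errRate μ η StopK)
      Filter.atTop (nhds 0) := by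
  set F : ℕ → 𝒳 → ℝ := fun n x => condRisk l (η x) (ηh n x) - condRisk l (η x) (η x) with hF
  set t : ℕ → 𝒳 → ℝ := fun n x => ∑ k, |η x k - ηh n x k| with ht
  have hFt : ∀ n x, μ₀ / 2 * (t n x) ^ 2 ≤ F n x := fun n x =>
    hl (η x) (hηΔ x) (ηh n x) (hηhΔ n x)
  have ht0 : ∀ n x, 0 ≤ t n x := fun n x => Finset.sum_nonneg fun k _ => abs_nonneg _
  have hF0 : ∀ n x, 0 ≤ F n x := fun n x => le_trans (by positivity) (hFt n x)
  have hmeasg : ∀ (S : 𝒳 → Finset (Fin C)), (∀ k, MeasurableSet {x | k ∈ S x}) →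
      Measurable (fun x => ∑ k ∈ S x, η x k) := by
    intro S hS
    have : (fun x => ∑ k ∈ S x, η x k)
        = fun x => ∑ k : Fin C, if k ∈ S x then η x k else 0 := by
      funext x
      rw [Finset.sum_ite_mem, Finset.univ_inter]
    rw [this]
    exact Finset.measurable_sum _ fun k _ => Measurable.ite (hS k) (hη k) measurable_const
  have hintg : ∀ (S : 𝒳 → Finset (Fin C)), (∀ k, MeasurableSet {x | k ∈ S x}) →
      Integrable (fun x => 1 - ∑ k ∈ S x, η x k) μ := by
    intro S hS
    refine (integrable_const (1:ℝ)).mono'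
      ((measurable_const.sub (hmeasg S hS)).aestronglyMeasurable) ?_
    filter_upwards with x
    have h0 : 0 ≤ ∑ k ∈ S x, η x k := Finset.sum_nonneg fun k _ => (hηΔ x).1 k
    have h1 : ∑ k ∈ S x, η x k ≤ 1 := by
      rw [← (hηΔ x).2]
      exact Finset.sum_le_sum_of_subset_of_nonneg (Finset.subset_univ _)
        fun k _ _ => (hηΔ x).1 k
    rw [Real.norm_eq_abs, abs_le]
    constructor <;> linarith
  set E : ℕ → 𝒳 → ℝ := fun n x => ∑ k ∈ StopK x, η x k - ∑ k ∈ Shat n x, η x k with hE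
  have hEint : ∀ n, Integrable (E n) μ := by
    intro n
    have := (hintg (Shat n) (hShat_meas n)).sub (hintg StopK hS_meas)
    apply this.congr
    filter_upwards with x
    simp only [Pi.sub_apply]
    ring
  have hD : ∀ n, errRate μ η (Shat n) - errRate μ η StopK = ∫ x, E n x ∂μ := by
    intro n
    rw [errRate, errRate, ← integral_sub (hintg (Shat n) (hShat_meas n)) (hintg StopK hS_meas)]
    congr 1
    funext x
    simp only [hE]
    ring
  have hE0 : ∀ n x, 0 ≤ E n x := by
    intro n x
    have := sum_top_exchange (η x) (Shat n x) (StopK x)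
      ((hShat_card n x).trans (hS_card x).symm) (hS_top x)
    simpa [hE] using sub_nonneg.mpr this
  have hE2t : ∀ n x, E n x ≤ 2 * t n x := by
    intro n x
    have hmid : ∑ k ∈ StopK x, ηh n x k ≤ ∑ k ∈ Shat n x, ηh n x k :=
      sum_top_exchange (ηh n x) (StopK x) (Shat n x)
        ((hS_card x).trans (hShat_card n x).symm) (hShat_top n x)
    have h1 : ∑ k ∈ StopK x, (η x k - ηh n x k) ≤ t n x := by
      calc ∑ k ∈ StopK x, (η x k - ηh n x k) ≤ ∑ k ∈ StopK x, |η x k - ηh n x k| :=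
            Finset.sum_le_sum fun k _ => le_abs_self _
        _ ≤ t n x := Finset.sum_le_sum_of_subset_of_nonneg (Finset.subset_univ _)
            fun k _ _ => abs_nonneg _
    have h2 : ∑ k ∈ Shat n x, (ηh n x k - η x k) ≤ t n x := by
      calc ∑ k ∈ Shat n x, (ηh n x k - η x k) ≤ ∑ k ∈ Shat n x, |η x k - ηh n x k| :=
            Finset.sum_le_sum fun k _ => by rw [abs_sub_comm]; exact le_abs_self _
        _ ≤ t n x := Finset.sum_le_sum_of_subset_of_nonneg (Finset.subset_univ _)
            fun k _ _ => abs_nonneg _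
    rw [Finset.sum_sub_distrib] at h1 h2
    simp only [hE]
    linarith
  have hkey : ∀ ε' > (0:ℝ), ∀ n x, E n x ≤ 2 * ε' + (4 / (μ₀ * ε')) * F n x := by
    intro ε' hε' n x
    have htb : t n x ≤ ε' + (2 / (μ₀ * ε')) * F n x := by
      rcases le_or_gt (t n x) ε' with h | h
      · have h3 : 0 ≤ (2 / (μ₀ * ε')) * F n x := by
          have := hF0 n x
          positivity
        linarith
      · have hmul : t n x * (μ₀ * ε') ≤ 2 * F n x :=
          aux_mul_bound μ₀ ε' (t n x) (F n x) hμ₀ h (ht0 n x) (hFt n x)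
        have h4 : t n x ≤ 2 * F n x / (μ₀ * ε') :=
          (le_div_iff₀ (by positivity)).mpr hmul
        have heq : 2 * F n x / (μ₀ * ε') = (2 / (μ₀ * ε')) * F n x := by ring
        linarith [heq ▸ h4]
    calc E n x ≤ 2 * t n x := hE2t n x
      _ ≤ 2 * (ε' + (2 / (μ₀ * ε')) * F n x) := by
          have h2 : (0:ℝ) ≤ 2 := by norm_num
          exact mul_le_mul_of_nonneg_left htb h2
      _ = 2 * ε' + (4 / (μ₀ * ε')) * F n x := by ring
  have hIkey : ∀ ε' > (0:ℝ), ∀ n,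
      ∫ x, E n x ∂μ ≤ 2 * ε' + (4 / (μ₀ * ε')) * ∫ x, F n x ∂μ := by
    intro ε' hε' n
    have h1 : ∫ x, E n x ∂μ ≤ ∫ x, (2 * ε' + (4 / (μ₀ * ε')) * F n x) ∂μ := by
      refine integral_mono (hEint n) ?_ (hkey ε' hε' n)
      exact (integrable_const _).add ((hint n).const_mul _)
    rw [integral_add (integrable_const _) ((hint n).const_mul _),
      integral_const, integral_const_mul, probReal_univ, smul_eq_mul,
      one_mul] at h1
    exact h1
  rw [Metric.tendsto_atTop] at hreg ⊢
  intro ε hε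
  set ε' := ε / 4 with hε'def
  have hε' : (0:ℝ) < ε' := by positivity
  set c := 4 / (μ₀ * ε') with hcdef
  have hcpos : (0:ℝ) < c := by positivity
  obtain ⟨N, hN⟩ := hreg (ε / (2 * c)) (by positivity)
  refine ⟨N, fun n hn => ?_⟩
  have hRn := hN n hn
  rw [Real.dist_eq, sub_zero] at hRn
  rw [Real.dist_eq, sub_zero]
  have hDn := hD n
  have hnonneg : 0 ≤ ∫ x, E n x ∂μ := integral_nonneg (hE0 n)
  have hub := hIkey ε' hε' n
  have habs : c * ∫ x, F n x ∂μ ≤ c * |∫ x, F n x ∂μ| :=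
    mul_le_mul_of_nonneg_left (le_abs_self _) hcpos.le
  have hlt : c * |∫ x, F n x ∂μ| < c * (ε / (2 * c)) :=
    mul_lt_mul_of_pos_left hRn hcpos
  have hcc : c * (ε / (2 * c)) = ε / 2 := by
    field_simp
  rw [hDn, abs_of_nonneg hnonneg]
  calc ∫ x, E n x ∂μ ≤ 2 * ε' + c * ∫ x, F n x ∂μ := hub
    _ < 2 * ε' + ε / 2 := by linarith
    _ = ε := by rw [hε'def]; ring
end

section
/- Let l_b : {−1, +1} × [0,1] → ℝ be a binary loss whose binary conditional risk L_b(r, s) = r·l_b(+1, s) + (1−r)·l_b(−1, s) satisfies L_b(r, s) − L_b(r, r) ≥ (μ₀/2)(r − s)² for all r, s ∈ [0,1] (binary μ₀-strong properness). Then the one-versus-all loss l_ova(k, q) = l_b(+1, q_k) + ∑_{k' ≠ k} l_b(−1, q_{k'}) satisfies L_ova(p, q) = ∑_{k=1}^C L_b(p_k, q_k) for all p, q ∈ Δ_C, and l_ova is (μ₀/C)-strongly proper: L_ova(p, q) − L_ova(p, p) ≥ (μ₀/(2C)) ‖p − q‖₁². -/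
open MeasureTheory Finset

/-- The one-versus-all loss built from a binary loss `lb` (with `true` playing the role of
`+1` and `false` of `−1`): `l_ova(k, q) = l_b(+1, q_k) + ∑_{k' ≠ k} l_b(−1, q_{k'})`. -/
noncomputable def lova {C : ℕ} (lb : Bool → ℝ → ℝ) (k : Fin C) (q : Fin C → ℝ) : ℝ :=
  lb true (q k) + ∑ k' ∈ Finset.univ.erase k, lb false (q k')

/-- if the binary conditional risk
`L_b(r,s) = r·l_b(+1,s) + (1−r)·l_b(−1,s)` satisfies binary `μ₀`-strong properness on
`[0,1]`, then the one-versus-all loss satisfies `L_ova(p,q) = ∑_k L_b(p_k, q_k)` on the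
simplex and is `(μ₀/C)`-strongly proper:
`L_ova(p,q) − L_ova(p,p) ≥ (μ₀/(2C)) ‖p − q‖₁²`. -/
theorem stmt_17 {C : ℕ} (hC : 0 < C) (lb : Bool → ℝ → ℝ) (μ₀ : ℝ) (hμ₀ : 0 < μ₀)
    (hlb : ∀ r ∈ Set.Icc (0 : ℝ) 1, ∀ s ∈ Set.Icc (0 : ℝ) 1,
      (r * lb true s + (1 - r) * lb false s) - (r * lb true r + (1 - r) * lb false r)
        ≥ μ₀ / 2 * (r - s) ^ 2) :
    ∀ p ∈ simplex C, ∀ q ∈ simplex C,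
      condRisk (lova lb) p q
          = ∑ k, (p k * lb true (q k) + (1 - p k) * lb false (q k))
        ∧ condRisk (lova lb) p q - condRisk (lova lb) p p
          ≥ μ₀ / (2 * C) * (∑ k, |p k - q k|) ^ 2 := by
  intro p hp q hq
  have mem01 : ∀ x ∈ simplex C, ∀ k, x k ∈ Set.Icc (0:ℝ) 1 := by
    intro x hx k
    refine ⟨hx.1 k, ?_⟩
    rw [← hx.2]
    exact Finset.single_le_sum (fun i _ => hx.1 i) (Finset.mem_univ k)
  have key : ∀ q' : Fin C → ℝ,
      condRisk (lova lb) p q'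
        = ∑ k, (p k * lb true (q' k) + (1 - p k) * lb false (q' k)) := by
    intro q'
    simp only [condRisk, lova]
    rw [← sub_eq_zero, ← Finset.sum_sub_distrib]
    have : ∀ k : Fin C,
        p k * (lb true (q' k) + ∑ k' ∈ Finset.univ.erase k, lb false (q' k'))
          - (p k * lb true (q' k) + (1 - p k) * lb false (q' k))
        = p k * (∑ k', lb false (q' k')) - lb false (q' k) := by
      intro k
      rw [Finset.sum_erase_eq_sub (Finset.mem_univ k)]
      ring
    rw [Finset.sum_congr rfl (fun k _ => this k), Finset.sum_sub_distrib,
      ← Finset.sum_mul, hp.2, one_mul, sub_self]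
  refine ⟨key q, ?_⟩
  rw [key q, key p]
  rw [← Finset.sum_sub_distrib]
  have step1 : ∑ k, ((p k * lb true (q k) + (1 - p k) * lb false (q k))
      - (p k * lb true (p k) + (1 - p k) * lb false (p k)))
      ≥ ∑ k, μ₀ / 2 * (p k - q k) ^ 2 :=
    Finset.sum_le_sum fun k _ => hlb (p k) (mem01 p hp k) (q k) (mem01 q hq k)
  refine le_trans ?_ step1
  rw [← Finset.mul_sum]
  have hcs : (∑ k, |p k - q k|) ^ 2 ≤ (C : ℝ) * ∑ k, (p k - q k) ^ 2 := by
    have := sq_sum_le_card_mul_sum_sq (s := (Finset.univ : Finset (Fin C)))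
      (f := fun k => |p k - q k|)
    simpa [sq_abs] using this
  have hCpos : (0:ℝ) < C := by exact_mod_cast hC
  rw [div_mul_eq_mul_div, div_mul_eq_mul_div, div_le_div_iff₀ (by positivity) (by norm_num)]
  calc μ₀ * (∑ k, |p k - q k|) ^ 2 * 2 ≤ μ₀ * ((C:ℝ) * ∑ k, (p k - q k) ^ 2) * 2 := by
        have h2 : (0:ℝ) ≤ ∑ k, (p k - q k) ^ 2 := Finset.sum_nonneg fun k _ => sq_nonneg _
        nlinarith [hcs]
    _ = μ₀ * (∑ k, (p k - q k) ^ 2) * (2 * C) := by ring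
end
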